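/- (Proposition 2.10, identification of the minimal volume expansion.) Let L : V → V be an invertible J-separated linear operator with J-polar decomposition L = R ∘ U (U a J-isometry, R J-symmetric with positive spectrum), and let r+_1 ≤ r+_2 ≤ … ≤ r+_p be the eigenvalues of R attached to the B-positive vectors of a B-orthogonal eigenbasis of R (the positive singular values of L). Then for every 1 ≤ d ≤ p one has σ_d(L) = r+_1 · r+_2 ⋯ r+_d. -/

import Mathlib

/-!
In the eigenbasis `B(v,v) = Σ sᵢ vᵢ²` and `B(Rv,Rv) = Σ sᵢ μᵢ² vᵢ²` with `sᵢ = ∓1`. Since `U` is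
a surjective isometry, `R` inherits the separation property of `L`; testing it on `μⱼ eᵢ + μᵢ eⱼ`
shows that the eigenvalues on the negative part are dominated by those on the positive part.
The subspace `U⁻¹ span(e_q, …, e_{q+d-1})` realises the product `μ_q ⋯ μ_{q+d-1}`. Conversely,
every `(k+1)`-dimensional subspace meets `span {eᵢ | i ∉ [q, q+k)}`, on which
`B(Rv,Rv) ≥ μ_{q+k}² B(v,v)`. Pulled back to the Gram matrices `G`, `H` of a basis of `W` and
its image under `L`, these Courant–Fischer-type bounds give, after simultaneous diagonalisation of
`G` and `H`, the inequality `det H / det G ≥ ∏ₖ μ_{q+k}²`.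
-/

/-- `σ_d(L)`: the infimum, over all `d`-dimensional subspaces `W` of `V` contained
(up to `0`) in the positive cone of `J`, of the rate of volume expansion
`α_d(L; W) = sqrt( det(B(Lwᵢ, Lwⱼ)) / det(B(wᵢ, wⱼ)) )` of `L` on `W`, computed with
respect to any basis `w₁, …, w_d` of `W`. -/
noncomputable def sigmaVol {V : Type*} [AddCommGroup V] [Module ℝ V]
    (B : V →ₗ[ℝ] V →ₗ[ℝ] ℝ) (L : V →ₗ[ℝ] V) (d : ℕ) : ℝ :=
  sInf {x : ℝ | ∃ W : Submodule ℝ V, Module.finrank ℝ W = d ∧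
    (∀ v ∈ W, v ≠ 0 → 0 < B v v) ∧
    ∃ b : Module.Basis (Fin d) ℝ W,
      x = Real.sqrt
        ((Matrix.of fun i j => B (L (b i : V)) (L (b j : V))).det /
         (Matrix.of fun i j => B (b i : V) (b j : V)).det)}

open Matrix Module

/-- By Courant–Fischer, for `Q₁ y = y ⬝ᵥ y` and `Q₂ y = y ⬝ᵥ M *ᵥ y` this says that the `k`-th
smallest eigenvalue of `M` (counting from `0`) is at least `c k`. -/
def IsMinMaxLowerBound {M : Type*} [AddCommGroup M] [Module ℝ M] {d : ℕ}
    (Q₁ Q₂ : M → ℝ) (c : Fin d → ℝ) : Prop :=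
  ∀ (k : Fin d) (S : Submodule ℝ M), finrank ℝ S = k + 1 → ∃ y ∈ S, y ≠ 0 ∧ c k * Q₁ y ≤ Q₂ y

namespace IsMinMaxLowerBound

variable {M M' : Type*} [AddCommGroup M] [Module ℝ M] [AddCommGroup M'] [Module ℝ M'] {d : ℕ}

theorem comp {Q₁ Q₂ : M → ℝ} {c : Fin d → ℝ} (h : IsMinMaxLowerBound Q₁ Q₂ c)
    {f : M' →ₗ[ℝ] M} (hf : Function.Injective f) : IsMinMaxLowerBound (Q₁ ∘ f) (Q₂ ∘ f) c := by
  intro k S hS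
  obtain ⟨_, ⟨y, hy, rfl⟩, hy0, hle⟩ :=
    h k (S.map f) ((Submodule.equivMapOfInjective f hf S).finrank_eq.symm.trans hS)
  exact ⟨y, hy, fun h0 => hy0 (by rw [h0, map_zero]), hle⟩

theorem le_sort {l c : Fin d → ℝ}
    (h : IsMinMaxLowerBound (fun y : Fin d → ℝ => ∑ i, y i ^ 2) (fun y => ∑ i, l i * y i ^ 2) c)
    (k : Fin d) : c k ≤ l (Tuple.sort l k) := by
  set σ := Tuple.sort l
  set A : Finset (Fin d) := (Finset.Iic k).map σ.toEmbedding
  set b := Pi.basisFun ℝ (Fin d)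
  have hAk : ∀ i ∈ A, l i ≤ l (σ k) := by
    simp only [A, Finset.mem_map, Finset.mem_Iic]
    rintro _ ⟨j, hj, rfl⟩
    exact Tuple.monotone_sort l hj
  have hA : finrank ℝ (Submodule.span ℝ (Set.range (b ∘ ((↑) : A → Fin d)))) = k + 1 := by
    rw [finrank_span_eq_card (b.linearIndependent.comp _ Subtype.val_injective),
      Fintype.card_coe, Finset.card_map, Fin.card_Iic]
  obtain ⟨y, hy, hy0, hle⟩ := h k _ hA
  have hsupp : ∀ i, y i ≠ 0 → i ∈ A := by
    rw [Set.range_comp, Subtype.range_coe, b.mem_span_image] at hy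
    intro i hi
    exact hy (by simpa [b] using hi)
  have hpos : 0 < ∑ i, y i ^ 2 := by
    obtain ⟨i, hi⟩ := Function.ne_iff.mp hy0
    exact Finset.sum_pos' (fun i _ => sq_nonneg _) ⟨i, Finset.mem_univ _, sq_pos_of_ne_zero hi⟩
  have hmax : ∑ i, l i * y i ^ 2 ≤ l (σ k) * ∑ i, y i ^ 2 := by
    rw [Finset.mul_sum]
    refine Finset.sum_le_sum fun i _ => ?_
    by_cases hi : y i = 0
    · simp [hi]
    · exact mul_le_mul_of_nonneg_right (hAk i (hsupp i hi)) (sq_nonneg _)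
  exact le_of_mul_le_mul_right (hle.trans hmax) hpos

theorem prod_le_prod {l c : Fin d → ℝ}
    (h : IsMinMaxLowerBound (fun y : Fin d → ℝ => ∑ i, y i ^ 2) (fun y => ∑ i, l i * y i ^ 2) c)
    (hc : ∀ k, 0 ≤ c k) : ∏ k, c k ≤ ∏ k, l k :=
  calc ∏ k, c k ≤ ∏ k, l (Tuple.sort l k) :=
        Finset.prod_le_prod (fun k _ => hc k) fun k _ => h.le_sort k
    _ = ∏ k, l k := Equiv.prod_comp _ l

end IsMinMaxLowerBound

theorem Matrix.IsHermitian.exists_transpose_mul_mul_eq_diagonal {n : Type*} [Fintype n]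
    [DecidableEq n] {M : Matrix n n ℝ} (hM : M.IsHermitian) :
    ∃ Q : Matrix n n ℝ, Qᵀ * Q = 1 ∧ Qᵀ * M * Q = diagonal hM.eigenvalues := by
  refine ⟨hM.eigenvectorUnitary, ?_, ?_⟩
  · simpa [star_eq_conjTranspose] using Unitary.coe_star_mul_self hM.eigenvectorUnitary
  · simpa [star_eq_conjTranspose, RCLike.ofReal_real_eq_id] using
      hM.conjStarAlgAut_star_eigenvectorUnitary

open scoped MatrixOrder in
theorem Matrix.PosDef.exists_transpose_mul_mul_eq_one_and_eq_diagonal {n : Type*} [Fintype n]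
    [DecidableEq n] {G H : Matrix n n ℝ} (hG : G.PosDef) (hH : H.IsHermitian) :
    ∃ (P : Matrix n n ℝ) (l : n → ℝ), Pᵀ * G * P = 1 ∧ Pᵀ * H * P = diagonal l := by
  obtain ⟨C, rfl⟩ := CStarAlgebra.nonneg_iff_eq_star_mul_self.mp hG.posSemidef.nonneg
  rw [star_eq_conjTranspose, conjTranspose_eq_transpose_of_trivial] at hG ⊢
  have hC : IsUnit C.det := by
    have := hG.det_pos
    rw [det_mul, det_transpose] at this
    exact isUnit_iff_ne_zero.2 fun h0 => by simp [h0] at this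
  have hM : (C⁻¹ᵀ * H * C⁻¹).IsHermitian := by
    simpa [conjTranspose_eq_transpose_of_trivial] using isHermitian_conjTranspose_mul_mul C⁻¹ hH
  obtain ⟨Q, hQ, hQM⟩ := hM.exists_transpose_mul_mul_eq_diagonal
  refine ⟨C⁻¹ * Q, hM.eigenvalues, ?_, ?_⟩
  · rw [transpose_mul]
    simp only [Matrix.mul_assoc]
    rw [← Matrix.mul_assoc C, mul_nonsing_inv _ hC, Matrix.one_mul, ← Matrix.mul_assoc C⁻¹ᵀ,
      ← transpose_mul, mul_nonsing_inv _ hC, transpose_one, Matrix.one_mul, hQ]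
  · simpa only [transpose_mul, Matrix.mul_assoc] using hQM

theorem Matrix.dotProduct_transpose_mul_mul_mulVec {n : Type*} [Fintype n] (A P : Matrix n n ℝ)
    (y : n → ℝ) : y ⬝ᵥ (Pᵀ * A * P) *ᵥ y = (P *ᵥ y) ⬝ᵥ A *ᵥ (P *ᵥ y) := by
  rw [← mulVec_mulVec, ← mulVec_mulVec, dotProduct_mulVec, vecMul_transpose]

theorem IsMinMaxLowerBound.prod_le_det_div_det {d : ℕ} {G H : Matrix (Fin d) (Fin d) ℝ}
    {c : Fin d → ℝ} (hG : G.PosDef) (hH : H.IsHermitian) (hc : ∀ k, 0 ≤ c k)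
    (h : IsMinMaxLowerBound (fun y => y ⬝ᵥ G *ᵥ y) (fun y => y ⬝ᵥ H *ᵥ y) c) :
    ∏ k, c k ≤ H.det / G.det := by
  obtain ⟨P, l, hPG, hPH⟩ := hG.exists_transpose_mul_mul_eq_one_and_eq_diagonal hH
  have hdet : P.det ^ 2 * G.det = 1 := by
    simpa [det_mul, det_transpose, sq, mul_comm, mul_left_comm] using congrArg det hPG
  have hP : Function.Injective P.mulVecLin :=
    mulVec_injective_iff_isUnit.2 <| (isUnit_iff_isUnit_det P).2 <|
      isUnit_iff_ne_zero.2 fun h0 => by simp [h0] at hdet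
  have hl : IsMinMaxLowerBound (fun y : Fin d → ℝ => ∑ i, y i ^ 2)
      (fun y => ∑ i, l i * y i ^ 2) c := by
    convert h.comp hP using 1 <;> funext y <;>
      simp only [Function.comp_apply, mulVecLin_apply, ← dotProduct_transpose_mul_mul_mulVec]
    · simp [hPG, dotProduct, sq]
    · simp only [hPH, dotProduct, mulVec_diagonal]
      exact Finset.sum_congr rfl fun i _ => by ring
  calc ∏ k, c k ≤ ∏ k, l k := hl.prod_le_prod hc
    _ = (Pᵀ * H * P).det := by rw [hPH, det_diagonal]
    _ = H.det / G.det := by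
      rw [eq_div_iff hG.det_pos.ne', det_mul, det_mul, det_transpose]
      linear_combination H.det * hdet

def gramMatrix {R M ι : Type*} [CommRing R] [AddCommGroup M] [Module R M]
    (B : M →ₗ[R] M →ₗ[R] R) (f : ι → M) : Matrix ι ι R :=
  Matrix.of fun i j => B (f i) (f j)

section gramMatrix

variable {R M ι : Type*} [CommRing R] [AddCommGroup M] [Module R M] [Fintype ι]

theorem dotProduct_gramMatrix_mulVec (B : M →ₗ[R] M →ₗ[R] R) (f : ι → M) (y : ι → R) :
    y ⬝ᵥ gramMatrix B f *ᵥ y =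
      B (Fintype.linearCombination R f y) (Fintype.linearCombination R f y) := by
  simp only [dotProduct, mulVec, gramMatrix, of_apply, Fintype.linearCombination_apply, map_sum,
    map_smul, LinearMap.sum_apply, LinearMap.smul_apply, smul_eq_mul, Finset.mul_sum]
  rw [Finset.sum_comm]
  exact Finset.sum_congr rfl fun i _ => Finset.sum_congr rfl fun j _ => by ring

end gramMatrix

section realGramMatrix

variable {V ι : Type*} [AddCommGroup V] [Module ℝ V] {B : V →ₗ[ℝ] V →ₗ[ℝ] ℝ} {f : ι → V}

theorem isHermitian_gramMatrix (hB : ∀ v w, B v w = B w v) (f : ι → V) :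
    (gramMatrix B f).IsHermitian := by
  ext i j
  exact hB (f j) (f i)

theorem posDef_gramMatrix [Fintype ι] (hB : ∀ v w, B v w = B w v) (hf : LinearIndependent ℝ f)
    (hpos : ∀ v ∈ Submodule.span ℝ (Set.range f), v ≠ 0 → 0 < B v v) :
    (gramMatrix B f).PosDef := by
  refine .of_dotProduct_mulVec_pos (isHermitian_gramMatrix hB f) fun y hy => ?_
  rw [star_trivial, dotProduct_gramMatrix_mulVec]
  refine hpos _ (Fintype.range_linearCombination ℝ f ▸ LinearMap.mem_range_self _ y) ?_
  rw [linearIndependent_iff_injective_fintypeLinearCombination] at hf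
  exact (map_ne_zero_iff _ hf).2 hy

theorem linearIndependent_of_posDef_gramMatrix [Fintype ι] (h : (gramMatrix B f).PosDef) :
    LinearIndependent ℝ f := by
  rw [linearIndependent_iff_injective_fintypeLinearCombination, injective_iff_map_eq_zero]
  intro y hy
  by_contra hy0
  have := h.dotProduct_mulVec_pos hy0
  rw [star_trivial, dotProduct_gramMatrix_mulVec, hy, map_zero] at this
  exact lt_irrefl _ this

theorem apply_self_pos_of_posDef_gramMatrix [Fintype ι] (h : (gramMatrix B f).PosDef) :
    ∀ v ∈ Submodule.span ℝ (Set.range f), v ≠ 0 → 0 < B v v := by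
  rintro v hv hv0
  obtain ⟨y, rfl⟩ : v ∈ LinearMap.range (Fintype.linearCombination ℝ f) := by simpa using hv
  have hy0 : y ≠ 0 := by rintro rfl; exact hv0 (map_zero _)
  simpa [dotProduct_gramMatrix_mulVec] using h.dotProduct_mulVec_pos hy0

theorem exists_basis_of_gramMatrix_eq_one [Fintype ι] [DecidableEq ι] (hf : gramMatrix B f = 1) :
    ∃ W : Submodule ℝ V, finrank ℝ W = Fintype.card ι ∧ (∀ v ∈ W, v ≠ 0 → 0 < B v v) ∧
      ∃ b : Basis ι ℝ W, ∀ i, (b i : V) = f i := by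
  have hG : (gramMatrix B f).PosDef := hf ▸ PosDef.one
  have hli := linearIndependent_of_posDef_gramMatrix hG
  exact ⟨_, finrank_span_eq_card hli, apply_self_pos_of_posDef_gramMatrix hG, Basis.span hli,
    fun i => by rw [Basis.span_apply]⟩

end realGramMatrix

section Eigenbasis

variable {V ι : Type*} [AddCommGroup V] [Module ℝ V] [Fintype ι] {B : V →ₗ[ℝ] V →ₗ[ℝ] ℝ}

theorem LinearMap.apply_self_eq_sum_of_isOrthoᵢ (e : Basis ι ℝ V) (he : B.IsOrthoᵢ e) (v : V) :
    B v v = ∑ i, e.repr v i ^ 2 * B (e i) (e i) := by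
  conv_lhs => rw [← e.sum_repr v]
  simp only [map_sum, map_smul, LinearMap.sum_apply, LinearMap.smul_apply, smul_eq_mul]
  refine Finset.sum_congr rfl fun i _ => ?_
  rw [Finset.sum_eq_single i (fun j _ hj => by rw [he hj]; ring) (by simp)]
  ring

theorem Module.Basis.repr_apply_eq_mul_of_eigen (e : Basis ι ℝ V) {T : V →ₗ[ℝ] V} {μ : ι → ℝ}
    (heig : ∀ i, T (e i) = μ i • e i) (v : V) (i : ι) : e.repr (T v) i = μ i * e.repr v i := by
  have hT : T v = ∑ j, (μ j * e.repr v j) • e j := by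
    conv_lhs => rw [← e.sum_repr v]
    simp only [map_sum, map_smul, heig, smul_smul, mul_comm]
  rw [hT, e.repr_sum_self]

theorem mul_apply_self_le_of_eigen (e : Basis ι ℝ V) (he : B.IsOrthoᵢ e) {R : V →ₗ[ℝ] V}
    {μ : ι → ℝ} (heig : ∀ i, R (e i) = μ i • e i) {c : ℝ} {u : V}
    (h : ∀ i, e.repr u i ≠ 0 → c * B (e i) (e i) ≤ μ i ^ 2 * B (e i) (e i)) :
    c * B u u ≤ B (R u) (R u) := by
  rw [B.apply_self_eq_sum_of_isOrthoᵢ e he, B.apply_self_eq_sum_of_isOrthoᵢ e he, Finset.mul_sum]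
  refine Finset.sum_le_sum fun i _ => ?_
  rw [e.repr_apply_eq_mul_of_eigen heig]
  by_cases hi : e.repr u i = 0
  · simp [hi]
  · nlinarith [mul_le_mul_of_nonneg_left (h i hi) (sq_nonneg (e.repr u i))]

end Eigenbasis

theorem Module.Basis.exists_mem_ne_zero_forall_repr_eq_zero {K V ι : Type*} [Field K]
    [AddCommGroup V] [Module K V] (e : Basis ι K V) (A : Finset ι) (P : Submodule K V)
    [FiniteDimensional K P] (hP : A.card < finrank K P) :
    ∃ u ∈ P, u ≠ 0 ∧ ∀ i ∈ A, e.repr u i = 0 := by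
  let f : P →ₗ[K] (A → K) := LinearMap.pi fun i => (e.coord i).comp P.subtype
  have hf : LinearMap.ker f ≠ ⊥ :=
    LinearMap.ker_ne_bot_of_finrank_lt (by rwa [finrank_fintype_fun_eq_card, Fintype.card_coe])
  obtain ⟨u, hu, hu0⟩ := Submodule.exists_mem_ne_zero_of_ne_bot hf
  exact ⟨u, u.2, by simpa using hu0, fun i hi => congr_fun hu ⟨i, hi⟩⟩

section JSeparated

variable {V : Type*} [AddCommGroup V] [Module ℝ V] {B : V →ₗ[ℝ] V →ₗ[ℝ] ℝ}

theorem apply_apply_eq_of_apply_self_eq (hB : ∀ v w, B v w = B w v) {U : V →ₗ[ℝ] V}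
    (hU : ∀ v, B (U v) (U v) = B v v) (v w : V) : B (U v) (U w) = B v w := by
  have := hU (v + w)
  simp only [map_add, LinearMap.add_apply] at this
  linarith [hU v, hU w, hB v w, hB (U v) (U w)]

theorem sq_le_sq_of_eigen {R : V →ₗ[ℝ] V} (hR : ∀ v, 0 < B v v → 0 < B (R v) (R v))
    {x y : V} {a b : ℝ} (hx : R x = a • x) (hy : R y = b • y) (hxx : B x x = -1)
    (hyy : B y y = 1) (hxy : B x y = 0) (hyx : B y x = 0) : a ^ 2 ≤ b ^ 2 := by
  by_contra! hab
  have hv : 0 < B (b • x + a • y) (b • x + a • y) := by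
    simp only [map_add, map_smul, LinearMap.add_apply, LinearMap.smul_apply, smul_eq_mul, hxx,
      hyy, hxy, hyx]
    linarith
  have hRv : B (R (b • x + a • y)) (R (b • x + a • y)) = 0 := by
    simp only [map_add, map_smul, hx, hy, smul_smul, LinearMap.add_apply, LinearMap.smul_apply,
      smul_eq_mul, hxx, hyy, hxy, hyx]
    ring
  exact (hR _ hv).ne' hRv

theorem isMinMaxLowerBound_of_eigenbasis {n q d : ℕ} (e : Basis (Fin n) ℝ V)
    (he : B.IsOrthoᵢ e) {R : V →ₗ[ℝ] V} {μ : Fin n → ℝ} (heig : ∀ i, R (e i) = μ i • e i)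
    (hneg : ∀ i : Fin n, (i : ℕ) < q → B (e i) (e i) = -1)
    (hpos : ∀ i : Fin n, q ≤ (i : ℕ) → B (e i) (e i) = 1)
    (hR : ∀ v, 0 < B v v → 0 < B (R v) (R v)) (hμpos : ∀ i, 0 < μ i)
    (hμmono : ∀ i j : Fin n, q ≤ (i : ℕ) → i ≤ j → μ i ≤ μ j) (hdp : q + d ≤ n) :
    IsMinMaxLowerBound (fun v => B v v) (fun v => B (R v) (R v))
      fun k : Fin d => μ (Fin.castLE hdp (Fin.natAdd q k)) ^ 2 := by
  intro k P hP
  set j : Fin n := Fin.castLE hdp (Fin.natAdd q k)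
  have : FiniteDimensional ℝ P := Module.finite_of_finrank_pos (by omega)
  let A := Finset.univ.filter fun i : Fin n => q ≤ (i : ℕ) ∧ (i : ℕ) < q + k
  have hA : A.card < finrank ℝ P :=
    calc A.card ≤ (Finset.Ico q (q + k)).card := Finset.card_le_card_of_injOn Fin.val
          (fun i hi => by simp_all [A]) Fin.val_injective.injOn
      _ < finrank ℝ P := by simp [hP]
  obtain ⟨u, hu, hu0, hvan⟩ := e.exists_mem_ne_zero_forall_repr_eq_zero A P hA
  refine ⟨u, hu, hu0, mul_apply_self_le_of_eigen e he heig fun i hi => ?_⟩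
  rcases lt_or_ge (i : ℕ) q with hiq | hiq
  · have := sq_le_sq_of_eigen hR (heig i) (heig j) (hneg i hiq) (hpos j (by simp [j]))
      (he (Fin.ne_of_val_ne (by simp [j]; omega))) (he (Fin.ne_of_val_ne (by simp [j]; omega)))
    rw [hneg i hiq]
    linarith
  · have hji : j ≤ i := by
      by_contra! hij
      exact hi (hvan i (Finset.mem_filter.2 ⟨Finset.mem_univ _, hiq, hij⟩))
    rw [hpos i hiq]
    nlinarith [hμmono j i (by simp [j]) hji, hμpos j]

theorem prod_le_sqrt_det_div_det {d : ℕ} (hB : ∀ v w, B v w = B w v) {L : V →ₗ[ℝ] V}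
    {W : Submodule ℝ V} (hW : ∀ v ∈ W, v ≠ 0 → 0 < B v v) (b : Basis (Fin d) ℝ W)
    {c : Fin d → ℝ}
    (h : IsMinMaxLowerBound (fun v => B v v) (fun v => B (L v) (L v)) fun k => c k ^ 2) :
    ∏ k, c k ≤ √((Matrix.of fun i j => B (L (b i : V)) (L (b j : V))).det /
      (Matrix.of fun i j => B (b i : V) (b j : V)).det) := by
  set f : Fin d → V := fun i => b i
  have hf : LinearIndependent ℝ f := b.linearIndependent.map' W.subtype W.ker_subtype
  have hG : (gramMatrix B f).PosDef := posDef_gramMatrix hB hf fun v hv =>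
    hW v (Submodule.span_le.2 (Set.range_subset_iff.2 fun i => (b i).2) hv)
  have hGH : IsMinMaxLowerBound (fun y => y ⬝ᵥ gramMatrix B f *ᵥ y)
      (fun y => y ⬝ᵥ gramMatrix (B.compl₁₂ L L) f *ᵥ y) fun k => c k ^ 2 := by
    convert h.comp (linearIndependent_iff_injective_fintypeLinearCombination.1 hf) using 1 <;>
      funext y <;> simp only [dotProduct_gramMatrix_mulVec, Function.comp_apply,
        LinearMap.compl₁₂_apply]
  have := hGH.prod_le_det_div_det hG (isHermitian_gramMatrix (fun v w => hB (L v) (L w)) f)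
    fun k => sq_nonneg _
  rw [Finset.prod_pow] at this
  exact (le_abs_self _).trans (Real.abs_le_sqrt this)

theorem exists_sqrt_det_div_det_eq_prod {n q d : ℕ} {L R U : V →ₗ[ℝ] V}
    (hUB : ∀ v w, B (U v) (U w) = B v w) (hU : Function.Surjective U) (hLRU : L = R ∘ₗ U)
    (e : Basis (Fin n) ℝ V) (he : B.IsOrthoᵢ e) {μ : Fin n → ℝ} (heig : ∀ i, R (e i) = μ i • e i)
    (hpos : ∀ i : Fin n, q ≤ (i : ℕ) → B (e i) (e i) = 1) (hμpos : ∀ i, 0 < μ i)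
    (hdp : q + d ≤ n) :
    ∃ W : Submodule ℝ V, finrank ℝ W = d ∧ (∀ v ∈ W, v ≠ 0 → 0 < B v v) ∧
      ∃ b : Basis (Fin d) ℝ W, ∏ i : Fin d, μ (Fin.castLE hdp (Fin.natAdd q i)) =
        √((Matrix.of fun i j => B (L (b i : V)) (L (b j : V))).det /
          (Matrix.of fun i j => B (b i : V) (b j : V)).det) := by
  set g : Fin d → Fin n := fun i => Fin.castLE hdp (Fin.natAdd q i)
  have heg : ∀ i j, B (e (g i)) (e (g j)) = if i = j then 1 else 0 := by
    intro i j
    split_ifs with h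
    · exact h ▸ hpos (g i) (Nat.le_add_right q i)
    · exact he fun hij => h (Fin.ext (by simpa [g] using congrArg Fin.val hij))
  choose w hw using fun i => hU (e (g i))
  have hw1 : gramMatrix B w = 1 := by
    ext i j
    rw [gramMatrix, of_apply, ← hUB, hw, hw, heg, one_apply]
  obtain ⟨W, hW, hWpos, b, hb⟩ := exists_basis_of_gramMatrix_eq_one hw1
  refine ⟨W, by simpa using hW, hWpos, b, ?_⟩
  have hG : (Matrix.of fun i j => B (b i : V) (b j : V)) = 1 := by
    simp only [← hw1, gramMatrix, hb]
  have hH : (Matrix.of fun i j => B (L (b i : V)) (L (b j : V))) =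
      diagonal fun i => μ (g i) ^ 2 := by
    ext i j
    simp only [of_apply, hb, hLRU, LinearMap.comp_apply, hw, heig, map_smul,
      LinearMap.smul_apply, smul_eq_mul, heg, diagonal_apply]
    split_ifs with h
    · rw [h]; ring
    · ring
  rw [hG, hH, det_diagonal, det_one, div_one, Finset.prod_pow,
    Real.sqrt_sq (Finset.prod_nonneg fun i _ => (hμpos _).le)]

theorem apply_self_pos_of_eq_comp {L R U : V →ₗ[ℝ] V} (hL : Function.Injective L)
    (hsep : ∀ v, 0 < B v v → 0 < B (L v) (L v) ∨ L v = 0)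
    (hU : ∀ v, B (U v) (U v) = B v v) (hUsurj : Function.Surjective U) (hLRU : L = R ∘ₗ U)
    (v : V) (hv : 0 < B v v) : 0 < B (R v) (R v) := by
  obtain ⟨u, rfl⟩ := hUsurj v
  rw [hU] at hv
  rcases hsep u hv with h | h
  · simpa [hLRU] using h
  · have : u = 0 := hL (h.trans (map_zero L).symm)
    simp [this] at hv

end JSeparated

/-- Proposition 2.10 (identification of the minimal volume expansion): let `L` be an
invertible J-separated operator with J-polar decomposition `L = R ∘ U`, and let
`e : Fin n → V` be a B-orthogonal eigenbasis of `R` with `B(eᵢ,eᵢ) = -1` for `i < q`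
and `= +1` for `i ≥ q`, `q` the index of `J`, with positive eigenvalues `μ` listed in
increasing order `r₊_1 ≤ … ≤ r₊_p` on the B-positive part (`p = n - q`). Then for
every `1 ≤ d ≤ p` one has `σ_d(L) = r₊_1 ⋯ r₊_d = μ(q) ⋯ μ(q+d-1)`. -/
theorem stmt_8
    {V : Type*} [AddCommGroup V] [Module ℝ V] [FiniteDimensional ℝ V]
    (B : V →ₗ[ℝ] V →ₗ[ℝ] ℝ)
    (hBsymm : ∀ v w : V, B v w = B w v)
    (L R U : V →ₗ[ℝ] V)
    (hL : Function.Bijective L)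
    (hsep : ∀ v : V, 0 < B v v → 0 < B (L v) (L v) ∨ L v = 0)
    (hU : ∀ v : V, B (U v) (U v) = B v v)
    (hLRU : L = R ∘ₗ U)
    (n q : ℕ)
    (e : Module.Basis (Fin n) ℝ V) (μ : Fin n → ℝ)
    (heig : ∀ i, R (e i) = μ i • e i)
    (horth : ∀ i j, i ≠ j → B (e i) (e j) = 0)
    (hneg : ∀ i : Fin n, (i : ℕ) < q → B (e i) (e i) = -1)
    (hpos : ∀ i : Fin n, q ≤ (i : ℕ) → B (e i) (e i) = 1)
    (hμpos : ∀ i, 0 < μ i)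
    (hμmono : ∀ i j : Fin n, q ≤ (i : ℕ) → i ≤ j → μ i ≤ μ j)
    (d : ℕ) (hdp : q + d ≤ n) :
    sigmaVol B L d = ∏ i : Fin d, μ ⟨q + (i : ℕ), by omega⟩ := by
  have hUinj : Function.Injective U := fun x y h => hL.1 (by simp [hLRU, h])
  have hUsurj := LinearMap.injective_iff_surjective.1 hUinj
  have he : B.IsOrthoᵢ e := fun i j h => horth i j h
  have hRsep := apply_self_pos_of_eq_comp hL.1 hsep hU hUsurj hLRU
  refine IsLeast.csInf_eq ⟨exists_sqrt_det_div_det_eq_prod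
    (apply_apply_eq_of_apply_self_eq hBsymm hU) hUsurj hLRU e he heig hpos hμpos hdp, ?_⟩
  rintro _ ⟨W, -, hW, b, rfl⟩
  refine prod_le_sqrt_det_div_det hBsymm hW b ?_
  have hLmm :=
    (isMinMaxLowerBound_of_eigenbasis e he heig hneg hpos hRsep hμpos hμmono hdp).comp hUinj
  simp only [Function.comp_def, hU] at hLmm
  rw [hLRU]
  exact hLmm
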